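/- Let n ≥ 4 and let ℓ_{a,b} : 𝒞_B(ℝⁿ) → 𝒞_B(ℝⁿ) be the Böhm–Wilking linear map ℓ_{a,b}(R) = R + b·Ric(R) ⊙ id + (1/n)(a−b)·scal(R)·id ⊙ id, where ⊙ is the Kulkarni–Nomizu product. Then ℓ_{a,b} maps the space of algebraic curvature tensors to itself, is linear, and is invertible when 1 + (n−2)b ≠ 0 and 1 + 2(n−1)a ≠ 0. -/

import Mathlib

open scoped BigOperators

/-- A curvature-type 4-tensor on `ℝⁿ`, given by its components. -/
abbrev CurvTensor (n : ℕ) := Fin n → Fin n → Fin n → Fin n → ℝ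

/-- The symmetries of an algebraic curvature tensor: antisymmetry in the first pair,
symmetry under interchange of the pairs, and the first Bianchi identity. -/
def IsAlgCurv {n : ℕ} (T : CurvTensor n) : Prop :=
  (∀ i j k l, T i j k l = - T j i k l) ∧
  (∀ i j k l, T i j k l = T k l i j) ∧
  (∀ i j k l, T i j k l + T i k l j + T i l j k = 0)

/-- Evaluation of a 4-tensor on vectors of `ℝⁿ`. -/
def ev {n : ℕ} (T : CurvTensor n) (v₁ v₂ v₃ v₄ : EuclideanSpace ℝ (Fin n)) : ℝ :=
  ∑ i, ∑ j, ∑ k, ∑ l, T i j k l * v₁ i * v₂ j * v₃ k * v₄ l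

/-- The scalar curvature of a curvature tensor. -/
def scal {n : ℕ} (T : CurvTensor n) : ℝ := ∑ i, ∑ j, T i j i j

/-- The Ricci curvature of a curvature tensor: `Ric(T)_{ik} = Σ_j T_{ijkj}`. -/
def ricci {n : ℕ} (T : CurvTensor n) : Fin n → Fin n → ℝ :=
  fun i k => ∑ j, T i j k j

/-- The Kulkarni–Nomizu product of two symmetric bilinear forms, as a 4-tensor. -/
def KN {n : ℕ} (A B : Fin n → Fin n → ℝ) : CurvTensor n :=
  fun i j k l => A i k * B j l + A j l * B i k - A i l * B j k - A j k * B i l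

/-- The identity bilinear form `δ_{ij}`. -/
def idForm (n : ℕ) : Fin n → Fin n → ℝ := fun i j => if i = j then 1 else 0

/-- The Böhm–Wilking map `ℓ_{a,b}(R) = R + b·Ric(R) ⊙ id + (1/n)(a-b)·scal(R)·id ⊙ id`. -/
noncomputable def ellab (n : ℕ) (a b : ℝ) (T : CurvTensor n) : CurvTensor n :=
  T + b • KN (ricci T) (idForm n) + (((a - b) / n) * scal T) • KN (idForm n) (idForm n)

/-! In the parameters `(a, b)` the maps `ℓ_{a,b}` compose like `x ∗ y = x + y + k x y`,
with `k = 2(n-1)` for `a` and `k = n-2` for `b`: `ℓ_{a,b}` scales the scalar curvature by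
`1 + 2(n-1)a` and the trace-free Ricci part by `1 + (n-2)b`. Hence
`ℓ_{-a/(1+2(n-1)a), -b/(1+(n-2)b)}` is a two-sided inverse of `ℓ_{a,b}`. -/

section InverseParameter

variable {K : Type*} [Field K] {k x : K}

lemma add_neg_div_add_mul_eq_zero (h : 1 + k * x ≠ 0) :
    x + -x / (1 + k * x) + k * x * (-x / (1 + k * x)) = 0 := by
  rw [div_eq_mul_inv]
  linear_combination -x * mul_inv_cancel₀ h

lemma neg_div_add_add_mul_eq_zero (h : 1 + k * x ≠ 0) :
    -x / (1 + k * x) + x + k * (-x / (1 + k * x)) * x = 0 := by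
  rw [div_eq_mul_inv]
  linear_combination -x * mul_inv_cancel₀ h

end InverseParameter

namespace CurvTensor

variable {n : ℕ}

lemma isAlgCurv_add {T T' : CurvTensor n} (hT : IsAlgCurv T) (hT' : IsAlgCurv T') :
    IsAlgCurv (T + T') := by
  refine ⟨fun i j k l => ?_, fun i j k l => ?_, fun i j k l => ?_⟩
  · simp only [Pi.add_apply, hT.1 i j k l, hT'.1 i j k l]; ring
  · simp only [Pi.add_apply, hT.2.1 i j k l, hT'.2.1 i j k l]
  · simp only [Pi.add_apply]; linear_combination hT.2.2 i j k l + hT'.2.2 i j k l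

lemma isAlgCurv_smul (r : ℝ) {T : CurvTensor n} (hT : IsAlgCurv T) : IsAlgCurv (r • T) := by
  refine ⟨fun i j k l => ?_, fun i j k l => ?_, fun i j k l => ?_⟩
  · simp only [Pi.smul_apply, smul_eq_mul, hT.1 i j k l]; ring
  · simp only [Pi.smul_apply, smul_eq_mul, hT.2.1 i j k l]
  · simp only [Pi.smul_apply, smul_eq_mul]; linear_combination r * hT.2.2 i j k l

lemma isAlgCurv_KN {A B : Fin n → Fin n → ℝ}
    (hA : ∀ i j, A i j = A j i) (hB : ∀ i j, B i j = B j i) : IsAlgCurv (KN A B) := by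
  refine ⟨fun i j k l => by simp only [KN]; ring, fun i j k l => ?_, fun i j k l => ?_⟩
  · simp only [KN]
    rw [hA i k, hA j l, hA i l, hA j k, hB i k, hB j l, hB i l, hB j k]; ring
  · simp only [KN]
    linear_combination A i k * hB j l + B i k * hA j l - A i l * hB j k - B i l * hA j k
      - A i j * hB k l - B i j * hA k l

lemma ricci_symm {T : CurvTensor n} (hT : IsAlgCurv T) (i k : Fin n) :
    ricci T i k = ricci T k i :=
  Finset.sum_congr rfl fun j _ => hT.2.1 i j k j

lemma idForm_symm (i j : Fin n) : idForm n i j = idForm n j i := by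
  simp only [idForm, eq_comm]

lemma isAlgCurv_ellab (a b : ℝ) {T : CurvTensor n} (hT : IsAlgCurv T) :
    IsAlgCurv (ellab n a b T) :=
  isAlgCurv_add
    (isAlgCurv_add hT (isAlgCurv_smul _ (isAlgCurv_KN (ricci_symm hT) idForm_symm)))
    (isAlgCurv_smul _ (isAlgCurv_KN idForm_symm idForm_symm))

lemma ricci_add (T T' : CurvTensor n) : ricci (T + T') = ricci T + ricci T' := by
  funext i k; simp only [ricci, Pi.add_apply, Finset.sum_add_distrib]

lemma ricci_smul (r : ℝ) (T : CurvTensor n) : ricci (r • T) = r • ricci T := by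
  funext i k; simp only [ricci, Pi.smul_apply, smul_eq_mul, Finset.mul_sum]

lemma scal_add (T T' : CurvTensor n) : scal (T + T') = scal T + scal T' := by
  simp only [scal, Pi.add_apply, Finset.sum_add_distrib]

lemma scal_smul (r : ℝ) (T : CurvTensor n) : scal (r • T) = r * scal T := by
  simp only [scal, Pi.smul_apply, smul_eq_mul, Finset.mul_sum]

lemma ellab_add (a b : ℝ) (T T' : CurvTensor n) :
    ellab n a b (T + T') = ellab n a b T + ellab n a b T' := by
  funext i j k l
  simp only [ellab, ricci_add, scal_add, KN, Pi.add_apply, Pi.smul_apply, smul_eq_mul]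
  ring

lemma ellab_smul (a b r : ℝ) (T : CurvTensor n) :
    ellab n a b (r • T) = r • ellab n a b T := by
  funext i j k l
  simp only [ellab, ricci_smul, scal_smul, KN, Pi.smul_apply, Pi.add_apply, smul_eq_mul]
  ring

lemma scal_eq_sum_ricci (T : CurvTensor n) : scal T = ∑ i, ricci T i i := rfl

lemma sum_idForm : ∑ i, idForm n i i = n := by
  simp [idForm]

lemma ricci_KN_idForm (A : Fin n → Fin n → ℝ) (i k : Fin n) :
    ricci (KN A (idForm n)) i k = (n - 2) * A i k + (∑ j, A j j) * idForm n i k := by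
  simp only [ricci, KN, idForm, mul_ite, mul_one, mul_zero, if_true, Finset.sum_add_distrib,
    Finset.sum_sub_distrib, Finset.sum_ite_irrel, Finset.sum_const_zero, Finset.sum_ite_eq,
    Finset.sum_ite_eq', Finset.mem_univ, Finset.sum_const, Finset.card_univ, Fintype.card_fin,
    nsmul_eq_mul]
  ring

lemma ricci_ellab (a b : ℝ) (T : CurvTensor n) (i k : Fin n) :
    ricci (ellab n a b T) i k = (1 + (n - 2) * b) * ricci T i k
      + (b + 2 * (n - 1) * ((a - b) / n)) * scal T * idForm n i k := by
  have hKN_ricci := ricci_KN_idForm (ricci T) i k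
  have hKN_id := ricci_KN_idForm (idForm n) i k
  rw [← scal_eq_sum_ricci] at hKN_ricci
  rw [sum_idForm, idForm] at hKN_id
  rw [ellab, ricci_add, ricci_add, ricci_smul, ricci_smul]
  simp only [Pi.add_apply, Pi.smul_apply, smul_eq_mul, hKN_ricci, hKN_id, idForm]
  split_ifs <;> ring

lemma scal_ellab (hn : n ≠ 0) (a b : ℝ) (T : CurvTensor n) :
    scal (ellab n a b T) = (1 + 2 * (n - 1) * a) * scal T := by
  have hn' : (n : ℝ) ≠ 0 := Nat.cast_ne_zero.mpr hn
  rw [scal_eq_sum_ricci]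
  simp only [ricci_ellab, Finset.sum_add_distrib, ← Finset.mul_sum,
    ← scal_eq_sum_ricci, sum_idForm]
  field_simp
  ring

lemma ellab_zero_zero (T : CurvTensor n) : ellab n 0 0 T = T := by
  funext i j k l
  simp [ellab]

lemma ellab_ellab (hn : n ≠ 0) (a b a' b' : ℝ) (T : CurvTensor n) :
    ellab n a' b' (ellab n a b T) =
      ellab n (a + a' + 2 * (n - 1) * a * a') (b + b' + (n - 2) * b * b') T := by
  have hn' : (n : ℝ) ≠ 0 := Nat.cast_ne_zero.mpr hn
  have hricci : ricci (ellab n a b T) = fun i k => (1 + (n - 2) * b) * ricci T i k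
      + (b + 2 * (n - 1) * ((a - b) / n)) * scal T * idForm n i k :=
    funext₂ (ricci_ellab a b T)
  rw [ellab, hricci, scal_ellab hn]
  funext i j k l
  simp only [ellab, KN, Pi.add_apply, Pi.smul_apply, smul_eq_mul]
  field_simp
  ring

lemma ellab_inv_leftInverse (hn : n ≠ 0) {a b : ℝ} (hb : 1 + (n - 2) * b ≠ 0)
    (ha : 1 + 2 * (n - 1) * a ≠ 0) :
    Function.LeftInverse (ellab n (-a / (1 + 2 * (n - 1) * a)) (-b / (1 + (n - 2) * b)))
      (ellab n a b) := by
  intro T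
  rw [ellab_ellab hn, add_neg_div_add_mul_eq_zero ha, add_neg_div_add_mul_eq_zero hb,
    ellab_zero_zero]

lemma ellab_inv_rightInverse (hn : n ≠ 0) {a b : ℝ} (hb : 1 + (n - 2) * b ≠ 0)
    (ha : 1 + 2 * (n - 1) * a ≠ 0) :
    Function.RightInverse (ellab n (-a / (1 + 2 * (n - 1) * a)) (-b / (1 + (n - 2) * b)))
      (ellab n a b) := by
  intro T
  rw [ellab_ellab hn, neg_div_add_add_mul_eq_zero ha, neg_div_add_add_mul_eq_zero hb,
    ellab_zero_zero]

end CurvTensor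

open CurvTensor in
/-- The Böhm–Wilking map `ℓ_{a,b}` preserves the space of algebraic curvature tensors,
is linear, and is invertible (a bijection of the space of algebraic curvature tensors
onto itself) whenever `1 + (n-2)b ≠ 0` and `1 + 2(n-1)a ≠ 0`. -/
theorem stmt17 (n : ℕ) (hn : 4 ≤ n) (a b : ℝ) :
    (∀ T : CurvTensor n, IsAlgCurv T → IsAlgCurv (ellab n a b T)) ∧
    (∀ T T' : CurvTensor n, ellab n a b (T + T') = ellab n a b T + ellab n a b T') ∧
    (∀ (c : ℝ) (T : CurvTensor n), ellab n a b (c • T) = c • ellab n a b T) ∧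
    (1 + ((n:ℝ) - 2) * b ≠ 0 → 1 + 2 * ((n:ℝ) - 1) * a ≠ 0 →
      Set.BijOn (ellab n a b) {T : CurvTensor n | IsAlgCurv T}
        {T : CurvTensor n | IsAlgCurv T}) := by
  refine ⟨fun T => isAlgCurv_ellab a b, ellab_add a b, ellab_smul a b, fun hb ha => ?_⟩
  have hn0 : n ≠ 0 := by omega
  exact Set.InvOn.bijOn
    ⟨fun T _ => ellab_inv_leftInverse hn0 hb ha T, fun T _ => ellab_inv_rightInverse hn0 hb ha T⟩
    (fun T => isAlgCurv_ellab a b) (fun T => isAlgCurv_ellab _ _)
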